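/- For any permutation σ ∈ S_{2m}, each connected component of the graph Γ(σ) contains an even number of edges, and hence the half-lengths of the connected components, arranged in decreasing order, form an integer partition of m (the coset-type of σ). -/

import Mathlib

open scoped BigOperators

/-- The first member of the `k`-th pair (0-indexed: `2k`). -/
def pairFst (m : ℕ) (k : Fin m) : Fin (2 * m) :=
  ⟨2 * k.val, by have := k.isLt; omega⟩

/-- The second member of the `k`-th pair (0-indexed: `2k+1`). -/
def pairSnd (m : ℕ) (k : Fin m) : Fin (2 * m) :=
  ⟨2 * k.val + 1, by have := k.isLt; omega⟩

/-- The graph `Γ(σ)` on vertices `{1, …, 2m}` with edges `(2k-1, 2k)` and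
`(σ(2k-1), σ(2k))` for `k = 1, …, m`. -/
def permGraph (m : ℕ) (σ : Equiv.Perm (Fin (2 * m))) : SimpleGraph (Fin (2 * m)) :=
  SimpleGraph.fromRel fun i j =>
    (∃ k, i = pairFst m k ∧ j = pairSnd m k) ∨
    (∃ k, i = σ (pairFst m k) ∧ j = σ (pairSnd m k))

/-- An endpoint of each of the `2m` edges of `Γ(σ)` (the edges are indexed by
`Fin m ⊕ Fin m`: black pair-edges and red `σ`-edges). -/
def edgeEnd (m : ℕ) (σ : Equiv.Perm (Fin (2 * m))) : Fin m ⊕ Fin m → Fin (2 * m) :=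
  Sum.elim (fun k => pairFst m k) (fun k => σ (pairFst m k))

/-!
Every vertex of `Γ(σ)` lies on exactly one pair edge `{2k, 2k+1}` and exactly one `σ`-edge
`{σ(2k), σ(2k+1)}`, and the endpoints of an edge lie in the same component. Hence in each
component `C` both kinds of edges are perfect matchings of `C`, so `C` contains `|C|/2` edges of
each kind, `|C|` in all, and the halves count the pair edges, which add up to `m`.
-/
section PairFibers

variable {ι α β : Type*}

theorem Nat.card_fiber_eq_two_mul_of_pairing [Finite ι] (e : ι × Fin 2 ≃ α) (f : α → β)
    (hf : ∀ i, f (e (i, 0)) = f (e (i, 1))) (b : β) :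
    Nat.card {a // f a = b} = 2 * Nat.card {i // f (e (i, 0)) = b} := by
  have hpair : ∀ p : ι × Fin 2, f (e p) = f (e (p.1, 0)) := by
    rintro ⟨i, j⟩
    fin_cases j
    · rfl
    · exact (hf i).symm
  calc Nat.card {a // f a = b}
      = Nat.card {p : ι × Fin 2 // f (e (p.1, 0)) = b} :=
        Nat.card_congr (e.subtypeEquiv fun p => by rw [hpair p]).symm
    _ = Nat.card ({i // f (e (i, 0)) = b} × Fin 2) :=
        Nat.card_congr (Equiv.prodSubtypeFstEquivSubtypeProd (p := fun i => f (e (i, 0)) = b))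
    _ = 2 * Nat.card {i // f (e (i, 0)) = b} := by
        rw [Nat.card_prod, Nat.card_eq_fintype_card (α := Fin 2), Fintype.card_fin, mul_comm]

theorem finsum_card_fiber_eq_card [Finite α] [Finite β] (g : α → β) :
    ∑ᶠ b, Nat.card {a // g a = b} = Nat.card α := by
  have := Fintype.ofFinite β
  rw [finsum_eq_sum_of_fintype, ← Nat.card_sigma, Nat.card_congr (Equiv.sigmaFiberEquiv g)]

end PairFibers

def pairEquiv (m : ℕ) : Fin m × Fin 2 ≃ Fin (2 * m) :=
  finProdFinEquiv.trans (finCongr (mul_comm m 2))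

@[simp]
theorem pairEquiv_zero (m : ℕ) (k : Fin m) : pairEquiv m (k, 0) = pairFst m k := by
  ext; simp [pairEquiv, pairFst]

@[simp]
theorem pairEquiv_one (m : ℕ) (k : Fin m) : pairEquiv m (k, 1) = pairSnd m k := by
  ext; simp [pairEquiv, pairSnd]; omega

namespace permGraph

variable {m : ℕ} (σ : Equiv.Perm (Fin (2 * m)))

theorem adj_pair (k : Fin m) : (permGraph m σ).Adj (pairFst m k) (pairSnd m k) := by
  refine ⟨?_, Or.inl (Or.inl ⟨k, rfl, rfl⟩)⟩
  simp [pairFst, pairSnd, Fin.ext_iff]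

theorem adj_perm_pair (k : Fin m) :
    (permGraph m σ).Adj (σ (pairFst m k)) (σ (pairSnd m k)) := by
  refine ⟨σ.injective.ne ((adj_pair σ k).ne), Or.inl (Or.inr ⟨k, rfl, rfl⟩)⟩

theorem card_edgeEnd_fiber (c : (permGraph m σ).ConnectedComponent) :
    Nat.card {k // (permGraph m σ).connectedComponentMk (edgeEnd m σ k) = c} =
      Nat.card {k // (permGraph m σ).connectedComponentMk (pairFst m k) = c} +
        Nat.card {k // (permGraph m σ).connectedComponentMk (σ (pairFst m k)) = c} := by
  rw [Nat.card_congr (Equiv.subtypeSum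
    (p := fun k => (permGraph m σ).connectedComponentMk (edgeEnd m σ k) = c)), Nat.card_sum]
  rfl

theorem card_pairFst_fiber_eq_card_perm_pairFst_fiber (c : (permGraph m σ).ConnectedComponent) :
    Nat.card {k // (permGraph m σ).connectedComponentMk (pairFst m k) = c} =
      Nat.card {k // (permGraph m σ).connectedComponentMk (σ (pairFst m k)) = c} := by
  have hpair := Nat.card_fiber_eq_two_mul_of_pairing (pairEquiv m)
    (permGraph m σ).connectedComponentMk
    (fun k => by simpa using SimpleGraph.ConnectedComponent.sound (adj_pair σ k).reachable) c
  have hperm := Nat.card_fiber_eq_two_mul_of_pairing ((pairEquiv m).trans σ)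
    (permGraph m σ).connectedComponentMk
    (fun k => by simpa using SimpleGraph.ConnectedComponent.sound (adj_perm_pair σ k).reachable) c
  simp only [Equiv.trans_apply, pairEquiv_zero] at hpair hperm
  omega

theorem card_edgeEnd_fiber_eq_two_mul (c : (permGraph m σ).ConnectedComponent) :
    Nat.card {k // (permGraph m σ).connectedComponentMk (edgeEnd m σ k) = c} =
      2 * Nat.card {k // (permGraph m σ).connectedComponentMk (pairFst m k) = c} := by
  rw [card_edgeEnd_fiber, ← card_pairFst_fiber_eq_card_perm_pairFst_fiber]
  exact (two_mul _).symm

end permGraph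

/-- Every connected component of `Γ(σ)` contains an even number of the `2m` edges
(counted with multiplicity), and hence the half-lengths of the components sum to `m`,
forming an integer partition of `m` (the coset-type of `σ`). -/
theorem permGraph_components_even_edges (m : ℕ) (σ : Equiv.Perm (Fin (2 * m))) :
    (∀ c : (permGraph m σ).ConnectedComponent,
        Even (Nat.card {k : Fin m ⊕ Fin m //
          (permGraph m σ).connectedComponentMk (edgeEnd m σ k) = c})) ∧
      ∑ᶠ c : (permGraph m σ).ConnectedComponent,
        (Nat.card {k : Fin m ⊕ Fin m //
          (permGraph m σ).connectedComponentMk (edgeEnd m σ k) = c}) / 2 = m := by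
  refine ⟨fun c => permGraph.card_edgeEnd_fiber_eq_two_mul σ c ▸ even_two_mul _, ?_⟩
  simp_rw [permGraph.card_edgeEnd_fiber_eq_two_mul, Nat.mul_div_cancel_left _ two_pos]
  rw [finsum_card_fiber_eq_card, Nat.card_eq_fintype_card, Fintype.card_fin]
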